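/- (Closed testing strong FWER control) Suppose for every nonempty subset I ⊆ {1,…,K} there is an α-level local test φ_I of the intersection hypothesis H_I = ∩_{i∈I} H_i. Define the closed testing procedure that rejects H_k if φ_I rejects for every I containing k. Then the probability of rejecting any true individual hypothesis is at most α. -/
import Mathlib

open MeasureTheory

/-- (Closed testing, strong FWER control.)  Suppose for every nonempty subset
`I ⊆ {1, …, K}` there is an `α`-level local test `φ I` of the intersection hypothesis
`H_I = ⋂ i ∈ I, H i`.  The closed testing procedure rejects `H k` iff `φ I` rejects for every
`I` containing `k`.  Then, for every parameter value `θ`, the probability of rejecting at least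
one true individual hypothesis is at most `α`. -/
theorem closed_testing_strong_fwer {Ω Θ : Type*} [MeasurableSpace Ω]
    (P : Θ → Measure Ω) (hP : ∀ θ, IsProbabilityMeasure (P θ))
    {K : ℕ}
    (H : Fin K → Set Θ)
    (φ : Finset (Fin K) → Ω → Prop)
    (α : ENNReal)
    (hlocal : ∀ I : Finset (Fin K), I.Nonempty → ∀ θ, (∀ i ∈ I, θ ∈ H i) →
      P θ {ω | φ I ω} ≤ α) :
    ∀ θ, P θ {ω | ∃ k, θ ∈ H k ∧ ∀ I : Finset (Fin K), k ∈ I → φ I ω} ≤ α := by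
  intro θ
  classical
  set T : Finset (Fin K) := Finset.univ.filter (fun k => θ ∈ H k) with hT
  have hsub : {ω : Ω | ∃ k, θ ∈ H k ∧ ∀ I : Finset (Fin K), k ∈ I → φ I ω} ⊆ {ω | φ T ω} := by
    rintro ω ⟨k, hk, hall⟩
    exact hall T (by simp [hT, hk])
  by_cases hne : T.Nonempty
  · exact le_trans (measure_mono hsub)
      (hlocal T hne θ (fun i hi => (Finset.mem_filter.mp hi).2))
  · have : {ω : Ω | ∃ k, θ ∈ H k ∧ ∀ I : Finset (Fin K), k ∈ I → φ I ω} = ∅ := by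
      ext ω
      simp only [Set.mem_setOf_eq, Set.mem_empty_iff_false, iff_false]
      rintro ⟨k, hk, -⟩
      exact hne ⟨k, by simp [hT, hk]⟩
    simp [this]
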